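/- arXiv:2302.02220 — 2 statements merged into one kernel-verified Lean document; each statement's English description precedes it below -/
import Mathlib

section
/- Assume (H2), (H3), (H5), (H6), and let p ≥ 1 with k > 1 the gain in (H5). Then for every open subset Ω₀ with Ω₀ ⋐ Ω there exists C > 0 such that (∫_{Ω₀} |u|^{kp} dν)^{1/(kp)} ≤ C [ (∫_Ω |u|^p dν)^{1/p} + (∫_Ω |√Q ∇u|^p dμ)^{1/p} ] for every u ∈ Lip_loc(Ω). -/
open MeasureTheory Metric Set Filter Topology Matrix
open scoped ENNReal NNReal BigOperators

noncomputable section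

/-- `ℝⁿ` with its Euclidean structure. -/
abbrev Euc (n : ℕ) := EuclideanSpace ℝ (Fin n)

variable {n : ℕ}

/-- The `ρ`-metric ball `B(x,r) = {y ∈ Ω | ρ x y < r}` inside `Ω`. -/
def MBall (ρ : Euc n → Euc n → ℝ) (Ω : Set (Euc n)) (x : Euc n) (r : ℝ) : Set (Euc n) :=
  {y ∈ Ω | ρ x y < r}

/-- `ρ` is a metric on `Ω` that generates a topology equivalent to the Euclidean one. -/
structure IsMetricOn (ρ : Euc n → Euc n → ℝ) (Ω : Set (Euc n)) : Prop where
  nonneg : ∀ x ∈ Ω, ∀ y ∈ Ω, 0 ≤ ρ x y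
  refl : ∀ x ∈ Ω, ρ x x = 0
  eq_of_eq_zero : ∀ x ∈ Ω, ∀ y ∈ Ω, ρ x y = 0 → x = y
  symm : ∀ x ∈ Ω, ∀ y ∈ Ω, ρ x y = ρ y x
  triangle : ∀ x ∈ Ω, ∀ y ∈ Ω, ∀ z ∈ Ω, ρ x z ≤ ρ x y + ρ y z
  equiv₁ : ∀ x ∈ Ω, ∀ ε > (0:ℝ), ∃ δ > (0:ℝ), ∀ y ∈ Ω, ρ x y < δ → dist y x < ε
  equiv₂ : ∀ x ∈ Ω, ∀ ε > (0:ℝ), ∃ δ > (0:ℝ), ∀ y ∈ Ω, dist y x < δ → ρ x y < ε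

/-- (H1) Segment property. -/
def SegmentProperty (ρ : Euc n → Euc n → ℝ) (Ω : Set (Euc n)) : Prop :=
  ∀ x ∈ Ω, ∀ y ∈ Ω, ∃ (a b : ℝ) (γ : ℝ → Euc n), a ≤ b ∧
    ContinuousOn γ (Icc a b) ∧ (∀ t ∈ Icc a b, γ t ∈ Ω) ∧
    γ a = x ∧ γ b = y ∧
    ∀ s ∈ Icc a b, ∀ t ∈ Icc a b, ρ (γ s) (γ t) = |s - t|

/-- Euclidean norm of a plain vector in `Fin n → ℝ`. -/
def vnorm (w : Fin n → ℝ) : ℝ := Real.sqrt (∑ i, (w i) ^ 2)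

/-- The (a.e.-defined) gradient of `u`, as a plain vector. -/
def grad (u : Euc n → ℝ) (x : Euc n) : Fin n → ℝ :=
  fun i => fderiv ℝ u x (EuclideanSpace.single i (1:ℝ))

/-- `u ∈ Lip_loc(Ω)`. -/
def LipLocOn (u : Euc n → ℝ) (Ω : Set (Euc n)) : Prop :=
  ∀ x ∈ Ω, ∃ (K : NNReal) (t : Set (Euc n)), t ∈ 𝓝 x ∧ LipschitzOnWith K u t

/-- `u ∈ Lip(A)`. -/
def LipOn (u : Euc n → ℝ) (A : Set (Euc n)) : Prop :=
  ∃ K : NNReal, LipschitzOnWith K u A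

/-- `u ∈ Lip₀(A)`: Lipschitz with compact support contained in `A`. -/
def Lip0 (u : Euc n → ℝ) (A : Set (Euc n)) : Prop :=
  (∃ K : NNReal, LipschitzWith K u) ∧ HasCompactSupport u ∧ tsupport u ⊆ A

/-- Operator "norm" `sup_{|ξ|=1} ⟨ξ, A ξ⟩` of a (nonnegative symmetric) matrix. -/
def qOpNorm (A : Matrix (Fin n) (Fin n) ℝ) : ℝ :=
  sSup {t : ℝ | ∃ ξ : Fin n → ℝ, vnorm ξ = 1 ∧ t = ∑ i, ξ i * A.mulVec ξ i}

/-- `v(x) = ‖Q(x)‖_op^{p/2}`. -/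
def vQ (p : ℝ) (Qm : Euc n → Matrix (Fin n) (Fin n) ℝ) (x : Euc n) : ℝ :=
  qOpNorm (Qm x) ^ (p/2)

/-- Convergence in `L^p(S, dω)`. -/
def TendstoLp (p : ℝ) (S : Set (Euc n)) (ω : Measure (Euc n))
    (F : ℕ → Euc n → ℝ) (f : Euc n → ℝ) : Prop :=
  Tendsto (fun j => ∫ x in S, |F j x - f x| ^ p ∂ω) atTop (𝓝 0)

/-- Convergence in `(L^p(S, dω))ⁿ`. -/
def TendstoLpV (p : ℝ) (S : Set (Euc n)) (ω : Measure (Euc n))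
    (F : ℕ → Euc n → Fin n → ℝ) (f : Euc n → Fin n → ℝ) : Prop :=
  Tendsto (fun j => ∫ x in S, (vnorm (fun i => F j x i - f x i)) ^ p ∂ω) atTop (𝓝 0)

/-- Pointwise `ω`-a.e. convergence on `S`. -/
def TendstoAE (S : Set (Euc n)) (ω : Measure (Euc n))
    (F : ℕ → Euc n → ℝ) (f : Euc n → ℝ) : Prop :=
  ∀ᵐ x ∂(ω.restrict S), Tendsto (fun j => F j x) atTop (𝓝 (f x))

/-- Pointwise `ω`-a.e. convergence on `S`, vector-valued. -/
def TendstoAEV (S : Set (Euc n)) (ω : Measure (Euc n))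
    (F : ℕ → Euc n → Fin n → ℝ) (f : Euc n → Fin n → ℝ) : Prop :=
  ∀ᵐ x ∂(ω.restrict S), Tendsto (fun j => F j x) atTop (𝓝 (f x))

/-- A measure is doubling (with constant `A`) on metric balls `B` with `2B ⋐ Ω`. -/
def DoublingOn (ρ : Euc n → Euc n → ℝ) (Ω : Set (Euc n)) (ω : Measure (Euc n))
    (A : ℝ≥0∞) : Prop :=
  ∀ (x : Euc n) (r : ℝ), 0 < r → closure (MBall ρ Ω x (2*r)) ⊆ Ω →
    ω (MBall ρ Ω x (2*r)) ≤ A * ω (MBall ρ Ω x r)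

/-- A measure is reverse-doubling of order 1 (with constant `C`). -/
def RevDoublingOn (ρ : Euc n → Euc n → ℝ) (Ω : Set (Euc n)) (ω : Measure (Euc n))
    (C : ℝ) : Prop :=
  ∀ (x x' : Euc n) (r r' : ℝ), 0 < r' → r' ≤ r →
    MBall ρ Ω x' r' ⊆ MBall ρ Ω x r → closure (MBall ρ Ω x r) ⊆ Ω →
    ENNReal.ofReal (C * (r / r')) * ω (MBall ρ Ω x' r') ≤ ω (MBall ρ Ω x r)

/-- (H4) Local Poincaré inequality. -/
def H4Poincare (ρ : Euc n → Euc n → ℝ) (Ω : Set (Euc n)) (μ ν : Measure (Euc n))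
    (sQ : Euc n → Matrix (Fin n) (Fin n) ℝ) (C₀ : ℝ) : Prop :=
  ∀ (x : Euc n) (r : ℝ), 0 < r → closure (MBall ρ Ω x r) ⊆ Ω →
    ∀ u : Euc n → ℝ, LipLocOn u Ω →
      (ν (MBall ρ Ω x r)).toReal⁻¹ *
        ∫ y in MBall ρ Ω x r,
          |u y - (ν (MBall ρ Ω x r)).toReal⁻¹ * ∫ z in MBall ρ Ω x r, u z ∂ν| ∂ν
      ≤ C₀ * r * ((μ (MBall ρ Ω x r)).toReal⁻¹ *
          ∫ y in MBall ρ Ω x r, vnorm ((sQ y).mulVec (grad u y)) ∂μ)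

/-- (H5) Local Sobolev inequality with gain `k`. -/
def H5Sobolev (ρ : Euc n → Euc n → ℝ) (Ω : Set (Euc n)) (μ ν : Measure (Euc n))
    (sQ : Euc n → Matrix (Fin n) (Fin n) ℝ) (p k C₁ : ℝ) : Prop :=
  ∀ (x : Euc n) (r : ℝ), 0 < r → closure (MBall ρ Ω x r) ⊆ Ω →
    ∀ u : Euc n → ℝ, Lip0 u (MBall ρ Ω x r) →
      ((ν (MBall ρ Ω x r)).toReal⁻¹ * ∫ y in MBall ρ Ω x r, |u y| ^ (k*p) ∂ν) ^ (1/(k*p))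
      ≤ C₁ * r * ((μ (MBall ρ Ω x r)).toReal⁻¹ *
          ∫ y in MBall ρ Ω x r, vnorm ((sQ y).mulVec (grad u y)) ^ p ∂μ) ^ (1/p)

/-- (H6) Accumulating sequences of Lipschitz cut-off functions. -/
def H6Cutoff (ρ : Euc n → Euc n → ℝ) (Ω : Set (Euc n))
    (Qm sQ : Euc n → Matrix (Fin n) (Fin n) ℝ) (p γ Ct T τ : ℝ) : Prop :=
  ∀ (x : Euc n) (r : ℝ), 0 < r → closure (MBall ρ Ω x r) ⊆ Ω →
    ∃ φ : ℕ → Euc n → ℝ,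
      ∀ j : ℕ, Lip0 (φ j) (MBall ρ Ω x r) ∧
        (∀ y, 0 ≤ φ j y ∧ φ j y ≤ 1) ∧
        (∀ y ∈ MBall ρ Ω x (τ*r), φ j y = 1) ∧
        tsupport (φ (j+1)) ⊆ {y | φ j y = 1} ∧
        ∀ᵐ y ∂(volume : Measure (Euc n)),
          vnorm ((sQ y).mulVec (grad (φ j) y)) ≤ (Ct * T ^ j / r ^ γ) * vQ p Qm y ^ (1/p)

/-- The kernel `R(x,y) = ρ(x,y) / μ(B(x,ρ(x,y)))`. -/
def Rker (ρ : Euc n → Euc n → ℝ) (Ω : Set (Euc n)) (μ : Measure (Euc n))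
    (x y : Euc n) : ℝ :=
  ρ x y / (μ (MBall ρ Ω x (ρ x y))).toReal

/-- The Stummel–Kato modulus `Φ_V(r)`. -/
def PhiV (ρ : Euc n → Euc n → ℝ) (Ω : Set (Euc n)) (μ ν : Measure (Euc n))
    (V : Euc n → ℝ) (p r : ℝ) : ℝ≥0∞ :=
  ⨆ x ∈ Ω,
    (∫⁻ y in MBall ρ Ω x r, ENNReal.ofReal (Rker ρ Ω μ x y) *
      (∫⁻ z in MBall ρ Ω x r, ENNReal.ofReal (|V z| * Rker ρ Ω μ z y) ∂ν) ^ (1/(p-1)) ∂μ) ^ (p-1)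

/-- `V ∈ M̃_p(Ω)`. -/
def MemMtilde (ρ : Euc n → Euc n → ℝ) (Ω : Set (Euc n)) (μ ν : Measure (Euc n))
    (V : Euc n → ℝ) (p : ℝ) : Prop :=
  ∀ r : ℝ, 0 < r → PhiV ρ Ω μ ν V p r < ⊤

/-- `V ∈ M_p(Ω)`. -/
def MemMp (ρ : Euc n → Euc n → ℝ) (Ω : Set (Euc n)) (μ ν : Measure (Euc n))
    (V : Euc n → ℝ) (p : ℝ) : Prop :=
  MemMtilde ρ Ω μ ν V p ∧
    Tendsto (fun r => PhiV ρ Ω μ ν V p r) (𝓝[>] (0:ℝ)) (𝓝 0)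

/-- `V ∈ M'_p(Ω)`. -/
def MemMp' (ρ : Euc n → Euc n → ℝ) (Ω : Set (Euc n)) (μ ν : Measure (Euc n))
    (V : Euc n → ℝ) (p : ℝ) : Prop :=
  MemMp ρ Ω μ ν V p ∧ ∃ ρ₀ > (0:ℝ),
    IntegrableOn (fun r => (PhiV ρ Ω μ ν V p r).toReal ^ (1/(p-1)) / r) (Ioc 0 ρ₀) volume

/-- The subrepresentation inequality (with constant `C`). -/
def Subrep (ρ : Euc n → Euc n → ℝ) (Ω : Set (Euc n)) (μ ν : Measure (Euc n))
    (sQ : Euc n → Matrix (Fin n) (Fin n) ℝ) (C : ℝ) : Prop :=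
  ∀ (x₀ : Euc n) (r : ℝ), 0 < r → closure (MBall ρ Ω x₀ r) ⊆ Ω →
    ∀ u : Euc n → ℝ, LipOn u (MBall ρ Ω x₀ r) →
      ∀ᵐ x ∂(ν.restrict (MBall ρ Ω x₀ r)),
        |u x - (ν (MBall ρ Ω x₀ r)).toReal⁻¹ * ∫ y in MBall ρ Ω x₀ r, u y ∂ν|
          ≤ C * ∫ y in MBall ρ Ω x₀ r, Rker ρ Ω μ x y * vnorm ((sQ y).mulVec (grad u y)) ∂μ

/-- `(u,g)` is a weak solution of `-div(h |√Q ∇u|^{p-2} Q ∇u) = m |f|^{p-2} f` on `Ω`. -/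
def WeakSol (Ω : Set (Euc n)) (μ ν : Measure (Euc n))
    (Qm sQ : Euc n → Matrix (Fin n) (Fin n) ℝ) (h m f : Euc n → ℝ) (p : ℝ)
    (u : Euc n → ℝ) (g : Euc n → Fin n → ℝ) : Prop :=
  (∫⁻ x in Ω, ENNReal.ofReal (|u x| ^ p) ∂ν) < ⊤ ∧
  (∫⁻ x in Ω, ENNReal.ofReal (vnorm ((sQ x).mulVec (g x)) ^ p) ∂μ) < ⊤ ∧
  (∃ uj : ℕ → Euc n → ℝ, (∀ j, LipLocOn (uj j) Ω) ∧ TendstoLp p Ω ν uj u ∧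
     TendstoLpV p Ω μ (fun j x => (sQ x).mulVec (grad (uj j) x))
       (fun x => (sQ x).mulVec (g x))) ∧
  ∀ φ : Euc n → ℝ, Lip0 φ Ω →
    (∫ x in Ω, vnorm ((sQ x).mulVec (g x)) ^ (p-2) *
        (∑ i, grad φ x i * (Qm x).mulVec (g x) i) * h x) +
    (∫ x in Ω, |f x| ^ (p-2) * f x * φ x * m x) = 0

/-!
Near each point of `closure Ω₀` take a ball `B ⋐ Ω` and the first cut-off `φ` of (H6) for `B`.
The local Sobolev inequality (H5) for `uφ ∈ Lip₀(B)` bounds the `L^{kp}(τB, ν)` norm of `u` by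
the `L^p(B, μ)` norm of `√Q∇(uφ)`. The Leibniz rule gives
`|√Q∇(uφ)| ≤ |√Q∇u| + Ct r^{-γ} |u| v^{1/p}`, and (H3), `v h ≤ C m`, turns the `μ`-integral of
`(|u| v^{1/p})^p` into the `ν`-integral of `|u|^p`. Finitely many balls `τB` cover
`closure Ω₀`, and the local bounds add up because `t ↦ t^{1/(kp)}` is subadditive.
-/

lemma vnorm_eq_norm (w : Fin n → ℝ) : vnorm w = ‖WithLp.toLp 2 w‖ := by
  simp [vnorm, EuclideanSpace.norm_eq]

lemma vnorm_nonneg (w : Fin n → ℝ) : 0 ≤ vnorm w := Real.sqrt_nonneg _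

lemma vnorm_add_le (a b : Fin n → ℝ) : vnorm (a + b) ≤ vnorm a + vnorm b := by
  simpa only [vnorm_eq_norm, WithLp.toLp_add] using norm_add_le _ _

lemma vnorm_smul (c : ℝ) (a : Fin n → ℝ) : vnorm (c • a) = |c| * vnorm a := by
  rw [vnorm_eq_norm, vnorm_eq_norm, WithLp.toLp_smul, norm_smul, Real.norm_eq_abs]

lemma grad_mul {u φ : Euc n → ℝ} {x : Euc n} (hu : DifferentiableAt ℝ u x)
    (hφ : DifferentiableAt ℝ φ x) :
    grad (fun y => u y * φ y) x = u x • grad φ x + φ x • grad u x := by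
  funext i
  simp [grad, fderiv_fun_mul hu hφ]

lemma vnorm_mulVec_grad_mul_le (A : Matrix (Fin n) (Fin n) ℝ) {u φ : Euc n → ℝ} {x : Euc n}
    (hu : DifferentiableAt ℝ u x) (hφ : DifferentiableAt ℝ φ x) (hφ1 : |φ x| ≤ 1) :
    vnorm (A *ᵥ grad (fun y => u y * φ y) x)
      ≤ vnorm (A *ᵥ grad u x) + |u x| * vnorm (A *ᵥ grad φ x) := by
  rw [grad_mul hu hφ, mulVec_add, mulVec_smul, mulVec_smul]
  refine (vnorm_add_le _ _).trans ?_
  rw [vnorm_smul, vnorm_smul, add_comm]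
  gcongr
  exact mul_le_of_le_one_left (vnorm_nonneg _) hφ1

lemma qOpNorm_nonneg {A : Matrix (Fin n) (Fin n) ℝ} (hA : A.PosSemidef) : 0 ≤ qOpNorm A := by
  refine Real.sSup_nonneg fun t ⟨ξ, _, ht⟩ => ht ▸ ?_
  simpa [dotProduct] using hA.dotProduct_mulVec_nonneg ξ

section Lipschitz

variable {α : Type*} [PseudoMetricSpace α]

lemma LipschitzOnWith.mul_of_norm_le {f g : α → ℝ} {s : Set α} {Kf Kg Mf Mg : ℝ≥0}
    (hf : LipschitzOnWith Kf f s) (hg : LipschitzOnWith Kg g s)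
    (hfM : ∀ x ∈ s, ‖f x‖ ≤ Mf) (hgM : ∀ x ∈ s, ‖g x‖ ≤ Mg) :
    LipschitzOnWith (Mf * Kg + Mg * Kf) (fun x => f x * g x) s := by
  refine LipschitzOnWith.of_dist_le_mul fun x hx y hy => ?_
  simp only [Real.dist_eq, NNReal.coe_add, NNReal.coe_mul]
  have hfxy := hf.dist_le_mul x hx y hy
  have hgxy := hg.dist_le_mul x hx y hy
  rw [Real.dist_eq] at hfxy hgxy
  have hfx := hfM x hx
  have hgy := hgM y hy
  rw [Real.norm_eq_abs] at hfx hgy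
  calc |f x * g x - f y * g y| = |f x * (g x - g y) + g y * (f x - f y)| := by
        congr 1; ring
    _ ≤ |f x| * |g x - g y| + |g y| * |f x - f y| := by
        rw [← abs_mul, ← abs_mul]; exact abs_add_le _ _
    _ ≤ Mf * (Kg * dist x y) + Mg * (Kf * dist x y) := by gcongr
    _ = (Mf * Kg + Mg * Kf) * dist x y := by ring

lemma LipschitzOnWith.exists_lipschitzWith_of_tsupport_subset {f : α → ℝ} {U : Set α}
    {K : ℝ≥0} (hf : LipschitzOnWith K f U) (hU : IsOpen U) (hcs : HasCompactSupport f)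
    (hfU : tsupport f ⊆ U) : ∃ K' : ℝ≥0, LipschitzWith K' f := by
  obtain ⟨δ, hδ, hδU⟩ := IsCompact.exists_thickening_subset_open hcs hU hfU
  obtain ⟨M₀, hM₀⟩ := hcs.exists_bound_of_continuousOn (hf.continuousOn.mono hfU)
  set M := max M₀ 0
  have hM : ∀ x, ‖f x‖ ≤ M := fun x => by
    by_cases hx : x ∈ tsupport f
    · exact (hM₀ x hx).trans (le_max_left _ _)
    · simp [image_eq_zero_of_notMem_tsupport hx, M]
  set L : ℝ := K + 2 * M / δ
  have key : ∀ x ∈ tsupport f, ∀ y, dist (f x) (f y) ≤ L * dist x y := by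
    intro x hx y
    rcases lt_or_ge (dist x y) δ with hxy | hxy
    · have hy : y ∈ U := hδU (Metric.mem_thickening_iff.2 ⟨x, hx, by rwa [dist_comm]⟩)
      calc dist (f x) (f y) ≤ K * dist x y := hf.dist_le_mul x (hfU hx) y hy
        _ ≤ L * dist x y := by gcongr; exact le_add_of_nonneg_right (by positivity)
    · calc dist (f x) (f y) ≤ ‖f x‖ + ‖f y‖ := dist_le_norm_add_norm _ _
        _ ≤ 2 * M / δ * δ := by rw [div_mul_cancel₀ _ hδ.ne']; linarith [hM x, hM y]
        _ ≤ L * dist x y := by gcongr; exact le_add_of_nonneg_left K.coe_nonneg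
  refine ⟨L.toNNReal, LipschitzWith.of_dist_le_mul fun x y => ?_⟩
  rw [Real.coe_toNNReal _ (by positivity)]
  by_cases hx : x ∈ tsupport f
  · exact key x hx y
  by_cases hy : y ∈ tsupport f
  · rw [dist_comm, dist_comm x]
    exact key y hy x
  · rw [image_eq_zero_of_notMem_tsupport hx, image_eq_zero_of_notMem_tsupport hy, dist_self]
    positivity

end Lipschitz

lemma LipLocOn.locallyLipschitzOn {u : Euc n → ℝ} {Ω : Set (Euc n)} (hu : LipLocOn u Ω) :
    LocallyLipschitzOn Ω u := fun x hx =>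
  let ⟨K, t, ht, hlip⟩ := hu x hx
  ⟨K, t, mem_nhdsWithin_of_mem_nhds ht, hlip⟩

lemma Lip0.mul_of_lipLocOn {u φ : Euc n → ℝ} {Ω A : Set (Euc n)} (hΩ : IsOpen Ω)
    (hu : LipLocOn u Ω) (hφ : Lip0 φ A) (hAΩ : A ⊆ Ω) : Lip0 (fun y => u y * φ y) A := by
  obtain ⟨⟨Kφ, hKφ⟩, hcs, hφA⟩ := hφ
  obtain ⟨V, hV, hφV, hVΩ, hVc⟩ :=
    exists_open_between_and_isCompact_closure hcs hΩ (hφA.trans hAΩ)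
  have huV := hu.locallyLipschitzOn.mono hVΩ
  obtain ⟨Ku, hKu⟩ := huV.exists_lipschitzOnWith_of_compact hVc
  obtain ⟨Mu, hMu⟩ := hVc.exists_bound_of_continuousOn huV.continuousOn
  obtain ⟨Mφ, hMφ⟩ := hKφ.continuous.bounded_above_of_compact_support hcs
  have hwV := (hKu.mono subset_closure).mul_of_norm_le hKφ.lipschitzOnWith
    (fun x hx => (hMu x (subset_closure hx)).trans (Real.le_coe_toNNReal Mu))
    (fun x _ => (hMφ x).trans (Real.le_coe_toNNReal Mφ))
  have hsupp : tsupport (fun y => u y * φ y) ⊆ tsupport φ := tsupport_mul_subset_right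
  exact ⟨hwV.exists_lipschitzWith_of_tsupport_subset hV hcs.mul_left (hsupp.trans hφV),
    hcs.mul_left, hsupp.trans hφA⟩

lemma LipLocOn.ae_differentiableAt {u : Euc n → ℝ} {Ω : Set (Euc n)} (hΩ : IsOpen Ω)
    (hu : LipLocOn u Ω) : ∀ᵐ x ∂volume.restrict Ω, DifferentiableAt ℝ u x := by
  rw [ae_restrict_iff' hΩ.measurableSet, ae_iff]
  refine measure_null_of_locally_null _ fun x hx => ?_
  obtain ⟨K, t, ht, hlip⟩ := hu x (Classical.not_imp.1 hx).1
  obtain ⟨V, hVt, hV, hxV⟩ := _root_.mem_nhds_iff.1 ht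
  refine ⟨_ ∩ V, inter_mem_nhdsWithin _ (hV.mem_nhds hxV), ?_⟩
  have hdiff := (hlip.mono hVt).ae_differentiableWithinAt (μ := volume) hV.measurableSet
  rw [ae_restrict_iff' hV.measurableSet, ae_iff] at hdiff
  refine measure_mono_null (fun y ⟨hy, hyV⟩ => ?_) hdiff
  exact fun hdy => hy fun _ => (hdy hyV).differentiableAt (hV.mem_nhds hyV)

section WeightedMeasure

variable {α : Type*} [MeasurableSpace α] {μ : Measure α} {f : α → ℝ}

lemma MeasureTheory.LocallyIntegrable.isFiniteMeasureOnCompacts_withDensity_ofReal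
    [TopologicalSpace α] [SFinite μ] (hf : LocallyIntegrable f μ) :
    IsFiniteMeasureOnCompacts (μ.withDensity fun x => ENNReal.ofReal (f x)) :=
  ⟨fun _ hK => by
    rw [withDensity_apply']
    exact (hf.integrableOn_isCompact hK).lintegral_lt_top⟩

lemma withDensity_ofReal_ne_zero {s : Set α} (hf : AEMeasurable f μ) (hs : μ s ≠ 0)
    (hpos : ∀ᵐ x ∂μ, x ∈ s → 0 < f x) :
    μ.withDensity (fun x => ENNReal.ofReal (f x)) s ≠ 0 := by
  rw [Ne, withDensity_apply_eq_zero' hf.ennreal_ofReal]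
  exact fun h0 => hs <| measure_mono_null_ae
    (hpos.mono fun x hx hxs => ⟨(ENNReal.ofReal_pos.2 (hx hxs)).ne', hxs⟩) h0

lemma ofReal_integral_le_lintegral_ofReal (hf : ∀ x, 0 ≤ f x) :
    ENNReal.ofReal (∫ x, f x ∂μ) ≤ ∫⁻ x, ENNReal.ofReal (f x) ∂μ := by
  rw [← Real.enorm_eq_ofReal (integral_nonneg hf)]
  refine (enorm_integral_le_lintegral_enorm f).trans_eq ?_
  simp_rw [Real.enorm_eq_ofReal (hf _)]

lemma setLIntegral_withDensity_ofReal {s : Set α} (hs : MeasurableSet s)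
    (hf : AEMeasurable f (μ.restrict s)) (g : α → ℝ≥0∞) :
    ∫⁻ x in s, g x ∂μ.withDensity (fun x => ENNReal.ofReal (f x))
      = ∫⁻ x in s, ENNReal.ofReal (f x) * g x ∂μ := by
  rw [restrict_withDensity hs, lintegral_withDensity_eq_lintegral_mul_non_measurable₀ _
    hf.ennreal_ofReal (ae_of_all _ fun _ => ENNReal.ofReal_lt_top)]
  rfl

lemma IsCompact.exists_rpow_setLIntegral_le {ι : Type*} [TopologicalSpace α] {K : Set α}
    (hK : IsCompact K) {e : ℝ} (he0 : 0 < e) (he1 : e ≤ 1) (F : ι → α → ℝ≥0∞) (X : ι → ℝ≥0∞)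
    (hloc : ∀ x ∈ K, ∃ U ∈ 𝓝 x, ∃ C : ℝ≥0, ∀ i, (∫⁻ y in U, F i y ∂μ) ^ e ≤ C * X i) :
    ∃ C : ℝ≥0, ∀ i, (∫⁻ y in K, F i y ∂μ) ^ e ≤ C * X i := by
  choose! U hU C hC using hloc
  obtain ⟨t, htK, hKt⟩ := hK.elim_nhds_subcover U hU
  refine ⟨∑ x ∈ t, C x, fun i => ?_⟩
  calc (∫⁻ y in K, F i y ∂μ) ^ e ≤ (∑ x ∈ t, ∫⁻ y in U x, F i y ∂μ) ^ e := by
        gcongr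
        calc _ ≤ ∫⁻ y in ⋃ x ∈ t, U x, F i y ∂μ := lintegral_mono_set hKt
          _ ≤ ∑' x : t, ∫⁻ y in U x, F i y ∂μ := by
              simpa only [Set.iUnion_subtype] using
                lintegral_iUnion_le (μ := μ) (fun x : t => U x) (F i)
          _ = _ := Finset.tsum_subtype t fun x => ∫⁻ y in U x, F i y ∂μ
    _ ≤ ∑ x ∈ t, (∫⁻ y in U x, F i y ∂μ) ^ e :=
        Finset.le_sum_of_subadditive (· ^ e) (ENNReal.zero_rpow_of_pos he0).le
          (fun a b => ENNReal.rpow_add_le_add_rpow a b he0.le he1) _ _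
    _ ≤ ∑ x ∈ t, C x * X i := Finset.sum_le_sum fun x hx => hC x (htK x hx) i
    _ = ↑(∑ x ∈ t, C x) * X i := by rw [ENNReal.ofNNReal_finsetSum, Finset.sum_mul]

end WeightedMeasure

lemma mBall_subset (ρ : Euc n → Euc n → ℝ) (Ω : Set (Euc n)) (x : Euc n) (r : ℝ) :
    MBall ρ Ω x r ⊆ Ω := fun _ hy => hy.1

namespace IsMetricOn

variable {ρ : Euc n → Euc n → ℝ} {Ω : Set (Euc n)} {x : Euc n} {r : ℝ}

lemma mem_mBall_self (hmet : IsMetricOn ρ Ω) (hx : x ∈ Ω) (hr : 0 < r) : x ∈ MBall ρ Ω x r :=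
  ⟨hx, by rwa [hmet.refl x hx]⟩

lemma isOpen_mBall (hmet : IsMetricOn ρ Ω) (hΩ : IsOpen Ω) (hx : x ∈ Ω) :
    IsOpen (MBall ρ Ω x r) := by
  rw [Metric.isOpen_iff]
  rintro y ⟨hyΩ, hyr⟩
  obtain ⟨ε, hε, hεΩ⟩ := Metric.isOpen_iff.1 hΩ y hyΩ
  obtain ⟨δ, hδ, hδρ⟩ := hmet.equiv₂ y hyΩ (r - ρ x y) (by linarith)
  refine ⟨min δ ε, lt_min hδ hε, fun z hz => ?_⟩
  have hzΩ : z ∈ Ω := hεΩ (Metric.ball_subset_ball (min_le_right _ _) hz)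
  have hρyz := hδρ z hzΩ (lt_of_lt_of_le hz (min_le_left _ _))
  exact ⟨hzΩ, (hmet.triangle x hx y hyΩ z hzΩ).trans_lt (by linarith)⟩

lemma exists_isCompact_closure_mBall_subset (hmet : IsMetricOn ρ Ω) (hΩ : IsOpen Ω)
    (hx : x ∈ Ω) :
    ∃ r > 0, IsCompact (closure (MBall ρ Ω x r)) ∧ closure (MBall ρ Ω x r) ⊆ Ω := by
  obtain ⟨ε, hε, hεΩ⟩ := Metric.isOpen_iff.1 hΩ x hx
  obtain ⟨δ, hδ, hδρ⟩ := hmet.equiv₁ x hx (ε / 2) (half_pos hε)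
  have hclosed : closure (MBall ρ Ω x δ) ⊆ Metric.closedBall x (ε / 2) :=
    closure_minimal (fun y ⟨hyΩ, hyδ⟩ => (hδρ y hyΩ hyδ).le) Metric.isClosed_closedBall
  refine ⟨δ, hδ, (isCompact_closedBall x _).of_isClosed_subset isClosed_closure hclosed, ?_⟩
  exact hclosed.trans ((Metric.closedBall_subset_ball (half_lt_self hε)).trans hεΩ)

lemma withDensity_mBall_ne_zero (hmet : IsMetricOn ρ Ω) (hΩ : IsOpen Ω) {m : Euc n → ℝ}
    (hm : AEMeasurable m volume) (hmpos : ∀ᵐ y ∂(volume.restrict Ω), 0 < m y) (hx : x ∈ Ω)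
    (hr : 0 < r) : volume.withDensity (fun y => ENNReal.ofReal (m y)) (MBall ρ Ω x r) ≠ 0 :=
  withDensity_ofReal_ne_zero hm
    ((hmet.isOpen_mBall hΩ hx).measure_ne_zero volume ⟨x, hmet.mem_mBall_self hx hr⟩)
    (((ae_restrict_iff' hΩ.measurableSet).1 hmpos).mono fun _ hy hyB => hy hyB.1)

end IsMetricOn

lemma H5Sobolev.rpow_setLIntegral_le {ρ : Euc n → Euc n → ℝ} {Ω : Set (Euc n)}
    {μ ν : Measure (Euc n)} [IsFiniteMeasureOnCompacts ν] {sQ : Euc n → Matrix (Fin n) (Fin n) ℝ}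
    {p k C₁ : ℝ} (hH5 : H5Sobolev ρ Ω μ ν sQ p k C₁) (hp : 0 < p) (hkp : 0 < k * p)
    {x : Euc n} {r : ℝ} (hr : 0 < r) (hcl : closure (MBall ρ Ω x r) ⊆ Ω)
    (hν0 : ν (MBall ρ Ω x r) ≠ 0) (hνtop : ν (MBall ρ Ω x r) ≠ ⊤)
    {w : Euc n → ℝ} (hw : Lip0 w (MBall ρ Ω x r)) :
    (∫⁻ y in MBall ρ Ω x r, ENNReal.ofReal (|w y| ^ (k * p)) ∂ν) ^ (1 / (k * p))
      ≤ ENNReal.ofReal (C₁ * r * (ν (MBall ρ Ω x r)).toReal ^ (1 / (k * p))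
          * ((μ (MBall ρ Ω x r)).toReal⁻¹) ^ (1 / p))
        * (∫⁻ y in MBall ρ Ω x r, ENNReal.ofReal (vnorm (sQ y *ᵥ grad w y) ^ p) ∂μ) ^ (1 / p) := by
  set B := MBall ρ Ω x r
  set a := (ν B).toReal
  set b := (μ B).toReal
  set I₁ := ∫ y in B, |w y| ^ (k * p) ∂ν
  set I₂ := ∫ y in B, vnorm (sQ y *ᵥ grad w y) ^ p ∂μ
  have ha : 0 < a := ENNReal.toReal_pos hν0 hνtop
  have hI₁ : 0 ≤ I₁ := integral_nonneg fun _ => by positivity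
  have hI₂ : 0 ≤ I₂ := integral_nonneg fun _ => Real.rpow_nonneg (vnorm_nonneg _) _
  have hint : Integrable (fun y => |w y| ^ (k * p)) (ν.restrict B) := by
    obtain ⟨⟨K, hK⟩, hcs, -⟩ := hw
    refine (Continuous.integrable_of_hasCompactSupport ?_ ?_).restrict
    · exact hK.continuous.abs.rpow_const fun _ => Or.inr hkp.le
    · exact hcs.comp_left (g := fun t : ℝ => |t| ^ (k * p)) (by simp [Real.zero_rpow hkp.ne'])
  have hsob : I₁ ^ (1 / (k * p))
      ≤ C₁ * r * a ^ (1 / (k * p)) * (b⁻¹) ^ (1 / p) * I₂ ^ (1 / p) := by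
    calc I₁ ^ (1 / (k * p)) = a ^ (1 / (k * p)) * (a⁻¹ * I₁) ^ (1 / (k * p)) := by
          rw [← Real.mul_rpow ha.le (by positivity), ← mul_assoc, mul_inv_cancel₀ ha.ne',
            one_mul]
      _ ≤ a ^ (1 / (k * p)) * (C₁ * r * (b⁻¹ * I₂) ^ (1 / p)) := by
          gcongr
          exact hH5 x r hr hcl w hw
      _ = C₁ * r * a ^ (1 / (k * p)) * (b⁻¹) ^ (1 / p) * I₂ ^ (1 / p) := by
          rw [Real.mul_rpow (inv_nonneg.2 ENNReal.toReal_nonneg) hI₂]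
          ring
  calc (∫⁻ y in B, ENNReal.ofReal (|w y| ^ (k * p)) ∂ν) ^ (1 / (k * p))
      = ENNReal.ofReal (I₁ ^ (1 / (k * p))) := by
        rw [← ofReal_integral_eq_lintegral_ofReal hint (ae_of_all _ fun _ => by positivity),
          ENNReal.ofReal_rpow_of_nonneg hI₁ (by positivity)]
    _ ≤ ENNReal.ofReal (C₁ * r * a ^ (1 / (k * p)) * (b⁻¹) ^ (1 / p) * I₂ ^ (1 / p)) :=
        ENNReal.ofReal_le_ofReal hsob
    _ = ENNReal.ofReal (C₁ * r * a ^ (1 / (k * p)) * (b⁻¹) ^ (1 / p))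
          * ENNReal.ofReal I₂ ^ (1 / p) := by
        rw [ENNReal.ofReal_mul' (by positivity), ENNReal.ofReal_rpow_of_nonneg hI₂ (by positivity)]
    _ ≤ _ := by
        gcongr
        exact ofReal_integral_le_lintegral_ofReal fun _ => Real.rpow_nonneg (vnorm_nonneg _) _

lemma ofReal_mul_vnorm_grad_mul_rpow_le {A : Matrix (Fin n) (Fin n) ℝ} {u φ : Euc n → ℝ}
    {y : Euc n} {p c C v h m : ℝ} (hp : 1 ≤ p) (hc : 0 ≤ c) (hC : 0 ≤ C) (hv : 0 ≤ v)
    (hu : DifferentiableAt ℝ u y) (hφ : DifferentiableAt ℝ φ y) (hφ1 : |φ y| ≤ 1)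
    (hgφ : vnorm (A *ᵥ grad φ y) ≤ c * v ^ (1 / p)) (hvh : v * h ≤ C * m) :
    ENNReal.ofReal h * ENNReal.ofReal (vnorm (A *ᵥ grad (fun y => u y * φ y) y) ^ p)
      ≤ 2 ^ (p - 1) * (ENNReal.ofReal h * ENNReal.ofReal (vnorm (A *ᵥ grad u y) ^ p))
        + 2 ^ (p - 1) * ENNReal.ofReal (c ^ p * C)
          * (ENNReal.ofReal m * ENNReal.ofReal (|u y| ^ p)) := by
  have hp0 : 0 ≤ p := zero_le_one.trans hp
  set a := vnorm (A *ᵥ grad u y)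
  set s := |u y| * (c * v ^ (1 / p))
  have ha : 0 ≤ a := vnorm_nonneg _
  have hv' : 0 ≤ v ^ (1 / p) := Real.rpow_nonneg hv _
  have hs : 0 ≤ s := by positivity
  have hgrad : vnorm (A *ᵥ grad (fun y => u y * φ y) y) ≤ a + s :=
    (vnorm_mulVec_grad_mul_le A hu hφ hφ1).trans
      (add_le_add le_rfl (mul_le_mul_of_nonneg_left hgφ (abs_nonneg _)))
  have hsp : h * s ^ p ≤ c ^ p * C * (m * |u y| ^ p) := by
    have : s ^ p = c ^ p * |u y| ^ p * v := by
      rw [Real.mul_rpow (abs_nonneg _) (mul_nonneg hc hv'), Real.mul_rpow hc hv',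
        ← Real.rpow_mul hv, one_div_mul_cancel (by linarith), Real.rpow_one]
      ring
    rw [this]
    nlinarith [mul_le_mul_of_nonneg_left hvh
      (mul_nonneg (Real.rpow_nonneg hc p) (Real.rpow_nonneg (abs_nonneg (u y)) p))]
  calc ENNReal.ofReal h * ENNReal.ofReal (vnorm (A *ᵥ grad (fun y => u y * φ y) y) ^ p)
      ≤ ENNReal.ofReal h * (ENNReal.ofReal a + ENNReal.ofReal s) ^ p := by
        rw [← ENNReal.ofReal_add ha hs, ENNReal.ofReal_rpow_of_nonneg (add_nonneg ha hs) hp0]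
        gcongr
        exact vnorm_nonneg _
    _ ≤ ENNReal.ofReal h * (2 ^ (p - 1) * (ENNReal.ofReal a ^ p + ENNReal.ofReal s ^ p)) := by
        gcongr
        exact ENNReal.rpow_add_le_mul_rpow_add_rpow _ _ hp
    _ = 2 ^ (p - 1) * (ENNReal.ofReal h * ENNReal.ofReal (a ^ p))
          + 2 ^ (p - 1) * ENNReal.ofReal (h * s ^ p) := by
        rw [ENNReal.ofReal_rpow_of_nonneg ha hp0, ENNReal.ofReal_rpow_of_nonneg hs hp0,
          ENNReal.ofReal_mul' (by positivity), ← ENNReal.ofReal_rpow_of_nonneg hs hp0]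
        ring
    _ ≤ _ := by
        rw [mul_assoc _ (ENNReal.ofReal _),
          ← ENNReal.ofReal_mul' (Real.rpow_nonneg (abs_nonneg (u y)) p),
          ← ENNReal.ofReal_mul (mul_nonneg (Real.rpow_nonneg hc p) hC)]
        gcongr

lemma setLIntegral_vnorm_grad_mul_cutoff_le {B : Set (Euc n)} (hB : MeasurableSet B)
    {A : Euc n → Matrix (Fin n) (Fin n) ℝ} {u φ v h m : Euc n → ℝ} {p c C : ℝ}
    (hp : 1 ≤ p) (hc : 0 ≤ c) (hC : 0 ≤ C) (hv : ∀ y ∈ B, 0 ≤ v y)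
    (hh : AEMeasurable h (volume.restrict B)) (hm : AEMeasurable m (volume.restrict B))
    (hu : AEMeasurable u (volume.restrict B))
    (hdu : ∀ᵐ y ∂volume.restrict B, DifferentiableAt ℝ u y)
    (hdφ : ∀ᵐ y ∂volume.restrict B, DifferentiableAt ℝ φ y) (hφ1 : ∀ y, |φ y| ≤ 1)
    (hgφ : ∀ᵐ y ∂volume.restrict B, vnorm (A y *ᵥ grad φ y) ≤ c * v y ^ (1 / p))
    (hvh : ∀ᵐ y ∂volume.restrict B, v y * h y ≤ C * m y) :
    ∫⁻ y in B, ENNReal.ofReal (vnorm (A y *ᵥ grad (fun y => u y * φ y) y) ^ p)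
        ∂volume.withDensity (fun x => ENNReal.ofReal (h x))
      ≤ 2 ^ (p - 1) * (1 + ENNReal.ofReal (c ^ p * C))
        * (∫⁻ y in B, ENNReal.ofReal (vnorm (A y *ᵥ grad u y) ^ p)
              ∂volume.withDensity (fun x => ENNReal.ofReal (h x))
          + ∫⁻ y in B, ENNReal.ofReal (|u y| ^ p)
              ∂volume.withDensity (fun x => ENNReal.ofReal (m x))) := by
  rw [setLIntegral_withDensity_ofReal hB hh, setLIntegral_withDensity_ofReal hB hh,
    setLIntegral_withDensity_ofReal hB hm]
  set c' := ENNReal.ofReal (c ^ p * C)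
  set X := ∫⁻ y in B, ENNReal.ofReal (h y) * ENNReal.ofReal (vnorm (A y *ᵥ grad u y) ^ p)
  set Y := ∫⁻ y in B, ENNReal.ofReal (m y) * ENNReal.ofReal (|u y| ^ p)
  have h2 : (2 : ℝ≥0∞) ^ (p - 1) ≠ ⊤ := ENNReal.rpow_ne_top_of_nonneg (by linarith) (by simp)
  have hpt : ∀ᵐ y ∂volume.restrict B,
      ENNReal.ofReal (h y) * ENNReal.ofReal (vnorm (A y *ᵥ grad (fun y => u y * φ y) y) ^ p)
        ≤ 2 ^ (p - 1) * (ENNReal.ofReal (h y) * ENNReal.ofReal (vnorm (A y *ᵥ grad u y) ^ p))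
          + 2 ^ (p - 1) * c' * (ENNReal.ofReal (m y) * ENNReal.ofReal (|u y| ^ p)) := by
    filter_upwards [hdu, hdφ, hgφ, hvh, ae_restrict_mem hB] with y hdu hdφ hgφ hvh hy
    exact ofReal_mul_vnorm_grad_mul_rpow_le hp hc hC (hv y hy) hdu hdφ (hφ1 y) hgφ hvh
  have hY : AEMeasurable (fun y => ENNReal.ofReal (m y) * ENNReal.ofReal (|u y| ^ p))
      (volume.restrict B) :=
    hm.ennreal_ofReal.mul (hu.abs.pow_const p).ennreal_ofReal
  calc _ ≤ ∫⁻ y in B, (2 ^ (p - 1) * (ENNReal.ofReal (h y)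
          * ENNReal.ofReal (vnorm (A y *ᵥ grad u y) ^ p))
          + 2 ^ (p - 1) * c' * (ENNReal.ofReal (m y) * ENNReal.ofReal (|u y| ^ p))) :=
        lintegral_mono_ae hpt
    _ = 2 ^ (p - 1) * (X + c' * Y) := by
        rw [lintegral_add_right' _ (hY.const_mul _), lintegral_const_mul' _ _ h2,
          lintegral_const_mul'' _ hY, mul_assoc, mul_add]
    _ ≤ 2 ^ (p - 1) * (1 + c') * (X + Y) := by
        rw [mul_assoc, mul_add (1 + c')]
        gcongr
        · exact le_mul_of_one_le_left' le_self_add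
        · exact le_add_self

lemma exists_local_sobolev_estimate {ρ : Euc n → Euc n → ℝ} {Ω : Set (Euc n)}
    {h m : Euc n → ℝ} {μ ν : Measure (Euc n)} {Qm sQ : Euc n → Matrix (Fin n) (Fin n) ℝ}
    {p k C₁ C γ Ct T τ : ℝ} (hΩ : IsOpen Ω) (hmet : IsMetricOn ρ Ω)
    (hhloc : LocallyIntegrable h volume) (hmloc : LocallyIntegrable m volume)
    (hμ : μ = volume.withDensity (fun x => ENNReal.ofReal (h x)))
    (hν : ν = volume.withDensity (fun x => ENNReal.ofReal (m x)))
    (hmpos : ∀ᵐ x ∂(volume.restrict Ω), 0 < m x) (hv : ∀ x ∈ Ω, 0 ≤ vQ p Qm x)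
    (hp : 1 ≤ p) (hkp : 0 < k * p) (hC : 0 ≤ C)
    (hvh : ∀ᵐ x ∂(volume.restrict Ω), vQ p Qm x * h x ≤ C * m x)
    (hH5 : H5Sobolev ρ Ω μ ν sQ p k C₁) (hCt : 0 ≤ Ct) (hH6 : H6Cutoff ρ Ω Qm sQ p γ Ct T τ)
    {x : Euc n} (hx : x ∈ Ω) {r : ℝ} (hr : 0 < r)
    (hcpt : IsCompact (closure (MBall ρ Ω x r))) (hcl : closure (MBall ρ Ω x r) ⊆ Ω) :
    ∃ K : ℝ≥0, ∀ u : Euc n → ℝ, LipLocOn u Ω →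
      (∫⁻ y in MBall ρ Ω x (τ * r), ENNReal.ofReal (|u y| ^ (k * p)) ∂ν) ^ (1 / (k * p))
        ≤ K * ((∫⁻ y in Ω, ENNReal.ofReal (|u y| ^ p) ∂ν) ^ (1 / p)
          + (∫⁻ y in Ω, ENNReal.ofReal (vnorm (sQ y *ᵥ grad u y) ^ p) ∂μ) ^ (1 / p)) := by
  have hp0 : 0 < p := zero_lt_one.trans_le hp
  set B := MBall ρ Ω x r
  have hB : IsOpen B := hmet.isOpen_mBall hΩ hx
  have hBΩ : B ⊆ Ω := mBall_subset ρ Ω x r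
  have : IsFiniteMeasureOnCompacts ν := hν ▸ hmloc.isFiniteMeasureOnCompacts_withDensity_ofReal
  have hνtop : ν B ≠ ⊤ := (measure_mono subset_closure |>.trans_lt hcpt.measure_lt_top).ne
  have hν0 : ν B ≠ 0 :=
    hν ▸ hmet.withDensity_mBall_ne_zero hΩ hmloc.aestronglyMeasurable.aemeasurable hmpos hx hr
  obtain ⟨φ, hφ⟩ := hH6 x r hr hcl
  obtain ⟨hφ0, hφ01, hφτ, -, hgφ⟩ := hφ 0
  have hc : 0 ≤ Ct * T ^ 0 / r ^ γ := by simpa using div_nonneg hCt (Real.rpow_nonneg hr.le γ)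
  set D := C₁ * r * (ν B).toReal ^ (1 / (k * p)) * ((μ B).toReal⁻¹) ^ (1 / p)
  set K : ℝ≥0∞ := 2 ^ (p - 1) * (1 + ENNReal.ofReal ((Ct * T ^ 0 / r ^ γ) ^ p * C))
  have hK : ENNReal.ofReal D * K ^ (1 / p) ≠ ⊤ := by finiteness
  refine ⟨(ENNReal.ofReal D * K ^ (1 / p)).toNNReal, fun u hu => ?_⟩
  have hw : Lip0 (fun y => u y * φ 0 y) B := hφ0.mul_of_lipLocOn hΩ hu hBΩ
  have hτB : MBall ρ Ω x (τ * r) ⊆ B := fun y hy =>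
    hφ0.2.2 (subset_tsupport _ (by simp [hφτ y hy]))
  have hcut := setLIntegral_vnorm_grad_mul_cutoff_le hB.measurableSet hp hc hC
    (fun y hy => hv y (hBΩ hy)) hhloc.aestronglyMeasurable.aemeasurable.restrict
    hmloc.aestronglyMeasurable.aemeasurable.restrict
    ((hu.locallyLipschitzOn.continuousOn.mono hBΩ).aemeasurable hB.measurableSet)
    (ae_restrict_of_ae_restrict_of_subset hBΩ (hu.ae_differentiableAt hΩ))
    (ae_restrict_of_ae (hφ0.1.choose_spec.ae_differentiableAt))
    (fun y => abs_le.2 ⟨by linarith [(hφ01 y).1], (hφ01 y).2⟩)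
    (ae_restrict_of_ae hgφ) (ae_restrict_of_ae_restrict_of_subset hBΩ hvh)
  rw [← hμ, ← hν] at hcut
  set 𝒜 := ∫⁻ y in Ω, ENNReal.ofReal (|u y| ^ p) ∂ν
  set ℬ := ∫⁻ y in Ω, ENNReal.ofReal (vnorm (sQ y *ᵥ grad u y) ^ p) ∂μ
  calc (∫⁻ y in MBall ρ Ω x (τ * r), ENNReal.ofReal (|u y| ^ (k * p)) ∂ν) ^ (1 / (k * p))
      = (∫⁻ y in MBall ρ Ω x (τ * r), ENNReal.ofReal (|u y * φ 0 y| ^ (k * p)) ∂ν)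
          ^ (1 / (k * p)) := by
        congr 1
        exact setLIntegral_congr_fun (hmet.isOpen_mBall hΩ hx).measurableSet
          fun y hy => by rw [hφτ y hy, mul_one]
    _ ≤ (∫⁻ y in B, ENNReal.ofReal (|u y * φ 0 y| ^ (k * p)) ∂ν) ^ (1 / (k * p)) := by
        gcongr
    _ ≤ ENNReal.ofReal D * (∫⁻ y in B,
          ENNReal.ofReal (vnorm (sQ y *ᵥ grad (fun y => u y * φ 0 y) y) ^ p) ∂μ) ^ (1 / p) :=
        hH5.rpow_setLIntegral_le hp0 hkp hr hcl hν0 hνtop hw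
    _ ≤ ENNReal.ofReal D * (K * (ℬ + 𝒜)) ^ (1 / p) := by
        gcongr
        exact hcut.trans (by gcongr <;> exact lintegral_mono_set hBΩ)
    _ ≤ ENNReal.ofReal D * (K ^ (1 / p) * (ℬ ^ (1 / p) + 𝒜 ^ (1 / p))) := by
        rw [ENNReal.mul_rpow_of_nonneg _ _ (by positivity)]
        gcongr
        exact ENNReal.rpow_add_le_add_rpow _ _ (by positivity) ((div_le_one hp0).2 hp)
    _ = _ := by
        rw [ENNReal.coe_toNNReal hK, add_comm (ℬ ^ (1 / p))]
        ring

theorem global_sobolev_no_gain_general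
    (ρ : Euc n → Euc n → ℝ) (Ω : Set (Euc n))
    (hΩopen : IsOpen Ω) (hmet : IsMetricOn ρ Ω)
    (h m : Euc n → ℝ)
    (hhloc : LocallyIntegrable h volume) (hmloc : LocallyIntegrable m volume)
    (μ ν : Measure (Euc n))
    (hμ : μ = volume.withDensity (fun x => ENNReal.ofReal (h x)))
    (hν : ν = volume.withDensity (fun x => ENNReal.ofReal (m x)))
    (Qm sQ : Euc n → Matrix (Fin n) (Fin n) ℝ)
    (hQ : ∀ x ∈ Ω, (Qm x).PosSemidef ∧ (sQ x).PosSemidef ∧ sQ x * sQ x = Qm x)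
    (p : ℝ) (hp : 1 ≤ p)
    -- (H3)
    (hmpos : ∀ᵐ x ∂(volume.restrict Ω), 0 < m x)
    (hvh : ∃ C > (0:ℝ), ∀ᵐ x ∂(volume.restrict Ω), vQ p Qm x * h x ≤ C * m x)
    -- (H5)
    (k C₁ : ℝ) (hk : 1 < k) (hH5 : H5Sobolev ρ Ω μ ν sQ p k C₁)
    -- (H6)
    (γ Ct T τ : ℝ) (hCt : 0 < Ct) (hτ0 : 0 < τ) (hH6 : H6Cutoff ρ Ω Qm sQ p γ Ct T τ)
    (Ω₀ : Set (Euc n)) (hΩ₀cl : IsCompact (closure Ω₀)) (hΩ₀Ω : closure Ω₀ ⊆ Ω) :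
    ∃ C > (0:ℝ), ∀ u : Euc n → ℝ, LipLocOn u Ω →
      (∫⁻ x in Ω₀, ENNReal.ofReal (|u x| ^ (k*p)) ∂ν) ^ (1/(k*p))
        ≤ ENNReal.ofReal C *
          ((∫⁻ x in Ω, ENNReal.ofReal (|u x| ^ p) ∂ν) ^ (1/p)
            + (∫⁻ x in Ω, ENNReal.ofReal (vnorm ((sQ x).mulVec (grad u x)) ^ p) ∂μ) ^ (1/p)) := by
  obtain ⟨C, hC, hvh⟩ := hvh
  have hkp : 1 ≤ k * p := by nlinarith
  have hv : ∀ x ∈ Ω, 0 ≤ vQ p Qm x := fun x hx =>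
    Real.rpow_nonneg (qOpNorm_nonneg (hQ x hx).1) _
  obtain ⟨K, hK⟩ := hΩ₀cl.exists_rpow_setLIntegral_le (μ := ν) (by positivity)
    ((div_le_one (by positivity)).2 hkp)
    (fun (u : {u // LipLocOn u Ω}) y => ENNReal.ofReal (|u.1 y| ^ (k * p)))
    (fun u => (∫⁻ x in Ω, ENNReal.ofReal (|u.1 x| ^ p) ∂ν) ^ (1 / p)
      + (∫⁻ x in Ω, ENNReal.ofReal (vnorm (sQ x *ᵥ grad u.1 x) ^ p) ∂μ) ^ (1 / p))
    fun z hz => by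
      have hzΩ := hΩ₀Ω hz
      obtain ⟨r, hr, hcpt, hcl⟩ := hmet.exists_isCompact_closure_mBall_subset hΩopen hzΩ
      obtain ⟨K, hK⟩ := exists_local_sobolev_estimate hΩopen hmet hhloc hmloc hμ hν hmpos hv
        hp (by linarith) hC.le hvh hH5 hCt.le hH6 hzΩ hr hcpt hcl
      exact ⟨_, (hmet.isOpen_mBall hΩopen hzΩ).mem_nhds (hmet.mem_mBall_self hzΩ
        (mul_pos hτ0 hr)), K, fun u => hK u.1 u.2⟩
  refine ⟨K + 1, by positivity, fun u hu => ?_⟩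
  calc _ ≤ (∫⁻ x in closure Ω₀, ENNReal.ofReal (|u x| ^ (k * p)) ∂ν) ^ (1 / (k * p)) := by
        gcongr
        exact subset_closure
    _ ≤ _ := hK ⟨u, hu⟩
    _ ≤ _ := by
        gcongr
        rw [ENNReal.ofReal_add K.coe_nonneg zero_le_one, ENNReal.ofReal_coe_nnreal]
        exact le_self_add

/-- global Sobolev-type estimate on compactly contained open subsets. -/
theorem global_sobolev_no_gain
    (ρ : Euc n → Euc n → ℝ) (Ω : Set (Euc n))
    (hΩopen : IsOpen Ω) (hΩconn : IsConnected Ω) (hΩbdd : Bornology.IsBounded Ω)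
    (hmet : IsMetricOn ρ Ω)
    (h m : Euc n → ℝ) (hh0 : ∀ x, 0 ≤ h x) (hm0 : ∀ x, 0 ≤ m x)
    (hhloc : LocallyIntegrable h volume) (hmloc : LocallyIntegrable m volume)
    (μ ν : Measure (Euc n))
    (hμ : μ = volume.withDensity (fun x => ENNReal.ofReal (h x)))
    (hν : ν = volume.withDensity (fun x => ENNReal.ofReal (m x)))
    (Qm sQ : Euc n → Matrix (Fin n) (Fin n) ℝ)
    (hQ : ∀ x ∈ Ω, (Qm x).PosSemidef ∧ (sQ x).PosSemidef ∧ sQ x * sQ x = Qm x)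
    (p : ℝ) (hp : 1 ≤ p)
    (hvloc : ∀ K : Set (Euc n), IsCompact K → K ⊆ Ω →
      (∫⁻ x in K, ENNReal.ofReal (vQ p Qm x) ∂μ) < ⊤)
    -- (H2)
    (Aμ Aν : ℝ≥0∞) (hdoubμ : DoublingOn ρ Ω μ Aμ) (hdoubν : DoublingOn ρ Ω ν Aν)
    (Crev : ℝ) (hCrev : 0 < Crev) (hrev : RevDoublingOn ρ Ω μ Crev)
    -- (H3)
    (habs : μ ≪ ν)
    (hmpos : ∀ᵐ x ∂(volume.restrict Ω), 0 < m x)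
    (hvh : ∃ C > (0:ℝ), ∀ᵐ x ∂(volume.restrict Ω), vQ p Qm x * h x ≤ C * m x)
    -- (H5)
    (k C₁ : ℝ) (hk : 1 < k) (hC₁ : 0 < C₁) (hH5 : H5Sobolev ρ Ω μ ν sQ p k C₁)
    -- (H6)
    (γ Ct T τ : ℝ) (hγ : 0 < γ) (hCt : 0 < Ct) (hT : 1 ≤ T) (hτ0 : 0 < τ) (hτ1 : τ < 1)
    (hH6 : H6Cutoff ρ Ω Qm sQ p γ Ct T τ)
    (Ω₀ : Set (Euc n)) (hΩ₀open : IsOpen Ω₀) (hΩ₀cl : IsCompact (closure Ω₀))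
    (hΩ₀Ω : closure Ω₀ ⊆ Ω) :
    ∃ C > (0:ℝ), ∀ u : Euc n → ℝ, LipLocOn u Ω →
      (∫⁻ x in Ω₀, ENNReal.ofReal (|u x| ^ (k*p)) ∂ν) ^ (1/(k*p))
        ≤ ENNReal.ofReal C *
          ((∫⁻ x in Ω, ENNReal.ofReal (|u x| ^ p) ∂ν) ^ (1/p)
            + (∫⁻ x in Ω, ENNReal.ofReal (vnorm ((sQ x).mulVec (grad u x)) ^ p) ∂μ) ^ (1/p)) :=
  global_sobolev_no_gain_general ρ Ω hΩopen hmet h m hhloc hmloc μ ν hμ hν Qm sQ hQ p hp hmpos hvh k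
    C₁ hk hH5 γ Ct T τ hCt hτ0 hH6 Ω₀ hΩ₀cl hΩ₀Ω

end
end

section
/- Let Φ : (0,∞) → (0,∞) be a continuous nondecreasing function with lim_{r→0⁺} Φ(r) = 0 (set Φ(0) = 0), let C > 0 be such that C⁻¹ belongs to the image of Φ, and let k, p > 1. Define Φ⁻¹(t) = min{r ≥ 0 : Φ(r) = t}. Then the series Σ_{j=0}^∞ k^{−j} log Φ⁻¹(1/(C k^{(p−1)j})) converges if and only if ∫₀^R Φ(r)^{1/(p−1)} / r dr converges for some R > 0. Moreover, in this case, if R₀ > 0 satisfies Φ(R₀) = C⁻¹, then C^{−1/(p−1)} ( −((k−1)/k) Σ_{j=0}^∞ k^{−j} log Φ⁻¹(1/(C k^{(p−1)j})) + log R₀ ) ≤ ∫₀^{R₀} Φ(r)^{1/(p−1)}/r dr ≤ C^{−1/(p−1)} ( −(k−1) Σ_{j=0}^∞ k^{−j} log Φ⁻¹(1/(C k^{(p−1)j})) + k log R₀ ). -/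
/-!
Put `τⱼ = 1 / (C k^{(p-1)j})`, `ρⱼ = Φ⁻¹(τⱼ)`, `h = Φ^{1/(p-1)}` and `c = C^{-1/(p-1)}`, so that
`h(ρⱼ) = c k⁻ʲ` and `ρⱼ` decreases to `0`. As `h` is monotone, the integral of `h(r)/r` over
`(ρⱼ₊₁, ρⱼ]` lies between `c k⁻ʲ⁻¹` and `c k⁻ʲ` times `log ρⱼ - log ρⱼ₊₁`, so the integral over
`(0, ρ₀]` is comparable to `Σ k⁻ʲ (log ρⱼ - log ρⱼ₊₁)`. Summation by parts rewrites this series as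
`k log ρ₀ - (k - 1) Σ k⁻ʲ log ρⱼ`, and the two series converge together because `log ρⱼ` decreases
to `-∞`. Finally `h = c` on `[ρ₀, R₀]`.
-/

open MeasureTheory Set Filter Topology

noncomputable section

/-- `Φ⁻¹(t) = min{r ≥ 0 | Φ(r) = t}`, where `Φ` is extended by `Φ(0) = 0`. -/
def PhiInvAux (Φ : ℝ → ℝ) (t : ℝ) : ℝ :=
  sInf {r : ℝ | 0 ≤ r ∧ (if r = 0 then 0 else Φ r) = t}

section PhiInvAux

variable {Φ : ℝ → ℝ} {t : ℝ}

lemma phiInvAux_of_ne_zero (ht : t ≠ 0) : PhiInvAux Φ t = sInf {r | 0 < r ∧ Φ r = t} := by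
  unfold PhiInvAux
  congr 1
  ext r
  rcases eq_or_ne r 0 with rfl | hr
  · simp [Ne.symm ht]
  · simp [hr, lt_iff_le_and_ne, Ne.symm hr]

lemma isLeast_phiInvAux (hcont : ContinuousOn Φ (Ioi 0)) (hlim : Tendsto Φ (𝓝[>] 0) (𝓝 0))
    {b : ℝ} (hb : 0 < b) (ht : 0 < t) (htb : t ≤ Φ b) :
    IsLeast {r | 0 < r ∧ Φ r = t} (PhiInvAux Φ t) := by
  rw [phiInvAux_of_ne_zero ht.ne']
  obtain ⟨u, hu, hΦu⟩ := mem_nhdsGT_iff_exists_Ioo_subset.1 (hlim.eventually_lt_const ht)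
  -- `Φ < t` on `(0, u)`, so the level set lies in `[u, ∞)`, where `Φ` is continuous.
  have hset : {r | 0 < r ∧ Φ r = t} = Ici u ∩ Φ ⁻¹' {t} := by
    ext r
    refine ⟨fun ⟨hr, hΦr⟩ => ⟨not_lt.1 fun hru => (hΦu ⟨hr, hru⟩).ne hΦr, hΦr⟩,
      fun ⟨hur, hΦr⟩ => ⟨lt_of_lt_of_le hu hur, hΦr⟩⟩
  obtain ⟨a, hΦa, ha, hab⟩ := ((hlim.eventually_lt_const ht).and (Ioo_mem_nhdsGT hb)).exists
  obtain ⟨r, hr, hΦr⟩ := intermediate_value_Icc hab.le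
    (hcont.mono fun x hx => ha.trans_le hx.1) ⟨hΦa.le, htb⟩
  refine IsClosed.isLeast_csInf ?_ ⟨r, ha.trans_le hr.1, hΦr⟩ ⟨0, fun r hr => hr.1.le⟩
  rw [hset]
  exact (hcont.mono fun x hx => hu.trans_le hx).preimage_isClosed_of_isClosed isClosed_Ici
    isClosed_singleton

end PhiInvAux

section MonotoneDivSelf

variable {h : ℝ → ℝ} {a b : ℝ}

lemma MonotoneOn.integrableOn_div_self (hh : MonotoneOn h (Icc a b)) (ha : 0 < a) :
    IntegrableOn (fun x => h x / x) (Ioc a b) :=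
  ((hh.integrableOn_isCompact isCompact_Icc).mul_continuousOn
    (continuousOn_inv₀.mono fun _ hx => (ha.trans_le hx.1).ne') isCompact_Icc).mono_set
    Ioc_subset_Icc_self

lemma setIntegral_const_div_self (q : ℝ) (ha : 0 < a) (hab : a ≤ b) :
    ∫ x in Ioc a b, q / x = q * Real.log (b / a) := by
  simp_rw [div_eq_mul_inv q]
  rw [integral_const_mul, ← intervalIntegral.integral_of_le hab,
    integral_inv_of_pos ha (ha.trans_le hab)]

lemma MonotoneOn.mul_log_le_setIntegral_div_self (hh : MonotoneOn h (Icc a b)) (ha : 0 < a)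
    (hab : a ≤ b) : h a * Real.log (b / a) ≤ ∫ x in Ioc a b, h x / x := by
  rw [← setIntegral_const_div_self _ ha hab]
  refine setIntegral_mono_on (monotoneOn_const.integrableOn_div_self ha)
    (hh.integrableOn_div_self ha) measurableSet_Ioc fun x hx => ?_
  exact div_le_div_of_nonneg_right (hh (left_mem_Icc.2 hab) (Ioc_subset_Icc_self hx) hx.1.le)
    (ha.trans hx.1).le

lemma MonotoneOn.setIntegral_div_self_le_mul_log (hh : MonotoneOn h (Icc a b)) (ha : 0 < a)
    (hab : a ≤ b) : ∫ x in Ioc a b, h x / x ≤ h b * Real.log (b / a) := by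
  rw [← setIntegral_const_div_self _ ha hab]
  refine setIntegral_mono_on (hh.integrableOn_div_self ha)
    (monotoneOn_const.integrableOn_div_self ha) measurableSet_Ioc fun x hx => ?_
  exact div_le_div_of_nonneg_right (hh (Ioc_subset_Icc_self hx) (right_mem_Icc.2 hab) hx.2)
    (ha.trans hx.1).le

lemma MonotoneOn.integrableOn_Ioc_zero_div_self_iff (hh : MonotoneOn h (Ioi 0)) (ha : 0 < a)
    (hb : 0 < b) :
    IntegrableOn (fun x => h x / x) (Ioc 0 a) ↔ IntegrableOn (fun x => h x / x) (Ioc 0 b) := by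
  wlog hab : a ≤ b generalizing a b
  · exact (this hb ha (le_of_not_ge hab)).symm
  refine ⟨fun hint => ?_, fun hint => hint.mono_set (Ioc_subset_Ioc_right hab)⟩
  rw [← Ioc_union_Ioc_eq_Ioc ha.le hab]
  exact hint.union ((hh.mono fun x hx => ha.trans_le hx.1).integrableOn_div_self ha)

lemma MonotoneOn.setIntegral_Ioc_zero_div_self_of_apply_eq (hh : MonotoneOn h (Ioi 0))
    (ha : 0 < a) (hab : a ≤ b) (hhab : h a = h b)
    (hint : IntegrableOn (fun x => h x / x) (Ioc 0 a)) :
    ∫ x in Ioc 0 b, h x / x = (∫ x in Ioc 0 a, h x / x) + h a * Real.log (b / a) := by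
  have hhIcc : MonotoneOn h (Icc a b) := hh.mono fun x hx => ha.trans_le hx.1
  rw [← Ioc_union_Ioc_eq_Ioc ha.le hab, setIntegral_union (Ioc_disjoint_Ioc_of_le le_rfl)
    measurableSet_Ioc hint (hhIcc.integrableOn_div_self ha)]
  congr 1
  refine le_antisymm ?_ (hhIcc.mul_log_le_setIntegral_div_self ha hab)
  exact hhab ▸ hhIcc.setIntegral_div_self_le_mul_log ha hab

end MonotoneDivSelf

lemma summable_of_eventually_nonneg_of_sum_range_le {f : ℕ → ℝ} {c : ℝ}
    (hf : ∀ᶠ n in atTop, 0 ≤ f n) (h : ∀ n, ∑ i ∈ Finset.range n, f i ≤ c) : Summable f := by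
  obtain ⟨N, hN⟩ := eventually_atTop.1 hf
  rw [← summable_nat_add_iff N]
  refine summable_of_sum_range_le (c := c - ∑ i ∈ Finset.range N, f i)
    (fun n => hN _ (Nat.le_add_left N n)) fun n => ?_
  have := h (N + n)
  rw [Finset.sum_range_add] at this
  simp only [add_comm _ N]
  linarith

section InvPowWeights

variable {k : ℝ} {L : ℕ → ℝ}

lemma sum_range_inv_pow_mul_sub_succ (hk : k ≠ 0) (n : ℕ) :
    ∑ j ∈ Finset.range n, (k ^ j)⁻¹ * (L j - L (j + 1)) =
      k * L 0 - (k - 1) * ∑ j ∈ Finset.range n, (k ^ j)⁻¹ * L j - k * ((k ^ n)⁻¹ * L n) := by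
  induction n with
  | zero => simp
  | succ n ih =>
    rw [Finset.sum_range_succ, Finset.sum_range_succ, ih, pow_succ]
    field_simp
    ring

lemma hasSum_inv_pow_mul_sub_succ (hk : 1 < k) (hL : Antitone L)
    (hA : Summable fun j => (k ^ j)⁻¹ * L j) :
    HasSum (fun j => (k ^ j)⁻¹ * (L j - L (j + 1)))
      (k * L 0 - (k - 1) * ∑' j, (k ^ j)⁻¹ * L j) := by
  have hk0 : 0 < k := zero_lt_one.trans hk
  refine (hasSum_iff_tendsto_nat_of_nonneg (fun j => mul_nonneg (by positivity)
    (sub_nonneg.2 (hL j.le_succ))) _).2 ?_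
  simp_rw [sum_range_inv_pow_mul_sub_succ hk0.ne']
  simpa using (tendsto_const_nhds.sub (hA.hasSum.tendsto_sum_nat.const_mul (k - 1))).sub
    (hA.tendsto_atTop_zero.const_mul k)

lemma summable_inv_pow_mul_sub_succ_iff (hk : 1 < k) (hL : Antitone L)
    (hLbot : Tendsto L atTop atBot) :
    (Summable fun j => (k ^ j)⁻¹ * (L j - L (j + 1))) ↔ Summable fun j => (k ^ j)⁻¹ * L j := by
  refine ⟨fun hT => ?_, fun hA => (hasSum_inv_pow_mul_sub_succ hk hL hA).summable⟩
  have hk0 : 0 < k := zero_lt_one.trans hk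
  have hA_le : ∀ n, (k ^ n)⁻¹ * L n ≤ |L 0| := fun n =>
    calc (k ^ n)⁻¹ * L n ≤ (k ^ n)⁻¹ * |L 0| :=
          mul_le_mul_of_nonneg_left ((hL n.zero_le).trans (le_abs_self _)) (by positivity)
      _ ≤ |L 0| := mul_le_of_le_one_left (abs_nonneg _) (inv_le_one_of_one_le₀ (one_le_pow₀ hk.le))
  have hT_le : ∀ n, ∑ j ∈ Finset.range n, (k ^ j)⁻¹ * (L j - L (j + 1)) ≤
      ∑' j, (k ^ j)⁻¹ * (L j - L (j + 1)) := fun n =>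
    hT.sum_le_tsum _ fun j _ => mul_nonneg (by positivity) (sub_nonneg.2 (hL j.le_succ))
  -- The terms are eventually `≤ 0`, and summation by parts bounds their partial sums below.
  suffices Summable fun j => -((k ^ j)⁻¹ * L j) by simpa using this.neg
  refine summable_of_eventually_nonneg_of_sum_range_le
    (c := ((∑' j, (k ^ j)⁻¹ * (L j - L (j + 1))) - k * L 0 + k * |L 0|) / (k - 1)) ?_ fun n => ?_
  · filter_upwards [hLbot.eventually_le_atBot 0] with j hj
    exact neg_nonneg.2 (mul_nonpos_of_nonneg_of_nonpos (by positivity) hj)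
  · rw [Finset.sum_neg_distrib, le_div_iff₀ (sub_pos.2 hk)]
    have := sum_range_inv_pow_mul_sub_succ (L := L) hk0.ne' n
    linarith [hT_le n, mul_le_mul_of_nonneg_left (hA_le n) hk0.le]

end InvPowWeights

lemma tendsto_zero_of_tendsto_apply_zero {α : Type*} {l : Filter α} {h : ℝ → ℝ} {ρ : α → ℝ}
    (hh : MonotoneOn h (Ioi 0)) (hpos : ∀ x, 0 < x → 0 < h x) (hρ : ∀ i, 0 < ρ i)
    (hlim : Tendsto (fun i => h (ρ i)) l (𝓝 0)) : Tendsto ρ l (𝓝 0) := by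
  refine tendsto_order.2 ⟨fun a ha => .of_forall fun i => ha.trans (hρ i), fun ε hε => ?_⟩
  filter_upwards [hlim.eventually_lt_const (hpos ε hε)] with i hi
  exact hh.reflect_lt (hρ i) hε hi

lemma Antitone.iUnion_Ioc_succ_eq_Ioc_zero {ρ : ℕ → ℝ} (hanti : Antitone ρ) (hρ : ∀ j, 0 < ρ j)
    (hlim : Tendsto ρ atTop (𝓝 0)) : ⋃ j, Ioc (ρ (j + 1)) (ρ j) = Ioc 0 (ρ 0) := by
  refine Subset.antisymm (iUnion_subset fun j x hx => ⟨(hρ _).trans hx.1, hx.2.trans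
    (hanti j.zero_le)⟩) fun x hx => ?_
  -- The first index `n` with `ρ n < x` is some `j + 1`, and then `x ∈ (ρ (j + 1), ρ j]`.
  have hex : ∃ n, ρ n < x := (hlim.eventually_lt_const hx.1).exists
  obtain ⟨j, hj⟩ : ∃ j, Nat.find hex = j + 1 :=
    Nat.exists_eq_succ_of_ne_zero fun h0 => (h0 ▸ Nat.find_spec hex).not_ge hx.2
  exact mem_iUnion.2 ⟨j, hj ▸ Nat.find_spec hex, not_lt.1 (Nat.find_min hex (by omega))⟩

section GeometricLevels

variable {h : ℝ → ℝ} {ρ : ℕ → ℝ} {c k : ℝ}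

lemma strictAnti_of_apply_eq_mul_inv_pow (hh : MonotoneOn h (Ioi 0)) (hρ : ∀ j, 0 < ρ j)
    (hhρ : ∀ j, h (ρ j) = c * (k ^ j)⁻¹) (hc : 0 < c) (hk : 1 < k) : StrictAnti ρ :=
  strictAnti_nat_of_succ_lt fun j => hh.reflect_lt (hρ _) (hρ _) <| by
    rw [hhρ, hhρ]
    gcongr
    exact j.lt_succ_self

lemma setIntegral_Ioc_succ_div_self_mem_Icc (hh : MonotoneOn h (Ioi 0)) (hρ : ∀ j, 0 < ρ j)
    (hhρ : ∀ j, h (ρ j) = c * (k ^ j)⁻¹) (hanti : Antitone ρ) (j : ℕ) :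
    ∫ x in Ioc (ρ (j + 1)) (ρ j), h x / x ∈
      Icc (c * k⁻¹ * ((k ^ j)⁻¹ * (Real.log (ρ j) - Real.log (ρ (j + 1)))))
        (c * ((k ^ j)⁻¹ * (Real.log (ρ j) - Real.log (ρ (j + 1))))) := by
  have hhIcc : MonotoneOn h (Icc (ρ (j + 1)) (ρ j)) := hh.mono fun x hx => (hρ _).trans_le hx.1
  have hle := hanti j.le_succ
  have hlog : Real.log (ρ j / ρ (j + 1)) = Real.log (ρ j) - Real.log (ρ (j + 1)) :=
    Real.log_div (hρ _).ne' (hρ _).ne'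
  constructor
  · refine le_of_eq_of_le ?_ (hhIcc.mul_log_le_setIntegral_div_self (hρ _) hle)
    rw [hhρ, hlog, pow_succ, mul_inv]
    ring
  · refine (hhIcc.setIntegral_div_self_le_mul_log (hρ _) hle).trans_eq ?_
    rw [hhρ, hlog]
    ring

lemma tendsto_zero_of_apply_eq_mul_inv_pow (hh : MonotoneOn h (Ioi 0))
    (hpos : ∀ x, 0 < x → 0 < h x) (hρ : ∀ j, 0 < ρ j) (hhρ : ∀ j, h (ρ j) = c * (k ^ j)⁻¹)
    (hk : 1 < k) : Tendsto ρ atTop (𝓝 0) := by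
  refine tendsto_zero_of_tendsto_apply_zero hh hpos hρ ?_
  simpa [hhρ, ← inv_pow] using (tendsto_pow_atTop_nhds_zero_of_lt_one (by positivity)
    (inv_lt_one_of_one_lt₀ hk)).const_mul c

lemma hasSum_setIntegral_Ioc_succ_div_self (hh : MonotoneOn h (Ioi 0))
    (hpos : ∀ x, 0 < x → 0 < h x) (hρ : ∀ j, 0 < ρ j) (hhρ : ∀ j, h (ρ j) = c * (k ^ j)⁻¹)
    (hc : 0 < c) (hk : 1 < k) (hint : IntegrableOn (fun x => h x / x) (Ioc 0 (ρ 0))) :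
    HasSum (fun j => ∫ x in Ioc (ρ (j + 1)) (ρ j), h x / x) (∫ x in Ioc 0 (ρ 0), h x / x) := by
  have hanti := (strictAnti_of_apply_eq_mul_inv_pow hh hρ hhρ hc hk).antitone
  have hunion := hanti.iUnion_Ioc_succ_eq_Ioc_zero hρ
    (tendsto_zero_of_apply_eq_mul_inv_pow hh hpos hρ hhρ hk)
  rw [← hunion] at hint ⊢
  exact hasSum_integral_iUnion (fun _ => measurableSet_Ioc) hanti.pairwise_disjoint_on_Ioc_succ hint

lemma integrableOn_Ioc_zero_div_self_iff_summable (hh : MonotoneOn h (Ioi 0))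
    (hpos : ∀ x, 0 < x → 0 < h x) (hρ : ∀ j, 0 < ρ j) (hhρ : ∀ j, h (ρ j) = c * (k ^ j)⁻¹)
    (hc : 0 < c) (hk : 1 < k) :
    IntegrableOn (fun x => h x / x) (Ioc 0 (ρ 0)) ↔
      Summable fun j => (k ^ j)⁻¹ * (Real.log (ρ j) - Real.log (ρ (j + 1))) := by
  have hanti := (strictAnti_of_apply_eq_mul_inv_pow hh hρ hhρ hc hk).antitone
  have hP := setIntegral_Ioc_succ_div_self_mem_Icc hh hρ hhρ hanti
  have hT : ∀ j, 0 ≤ (k ^ j)⁻¹ * (Real.log (ρ j) - Real.log (ρ (j + 1))) := fun j =>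
    mul_nonneg (by positivity) (sub_nonneg.2 (Real.log_le_log (hρ _) (hanti j.le_succ)))
  constructor
  · intro hint
    refine .of_nonneg_of_le hT (fun j => ?_)
      ((hasSum_setIntegral_Ioc_succ_div_self hh hpos hρ hhρ hc hk hint).summable.mul_left
        (k * c⁻¹))
    calc _ = k * c⁻¹ * (c * k⁻¹ * ((k ^ j)⁻¹ * (Real.log (ρ j) - Real.log (ρ (j + 1))))) := by
          field_simp
      _ ≤ _ := mul_le_mul_of_nonneg_left (hP j).1 (by positivity)
  · intro hTsum
    rw [← hanti.iUnion_Ioc_succ_eq_Ioc_zero hρ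
      (tendsto_zero_of_apply_eq_mul_inv_pow hh hpos hρ hhρ hk)]
    refine integrableOn_iUnion_of_summable_integral_norm (fun j => (hh.mono fun x hx =>
      (hρ _).trans_le hx.1).integrableOn_div_self (hρ _)) ?_
    have hnorm (j : ℕ) : ∫ x in Ioc (ρ (j + 1)) (ρ j), ‖h x / x‖ =
        ∫ x in Ioc (ρ (j + 1)) (ρ j), h x / x :=
      setIntegral_congr_fun measurableSet_Ioc fun x hx => Real.norm_of_nonneg
        (div_nonneg (hpos x ((hρ _).trans hx.1)).le ((hρ _).trans hx.1).le)
    simp_rw [hnorm]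
    exact .of_nonneg_of_le (fun j => (mul_nonneg (mul_nonneg hc.le (by positivity)) (hT j)).trans
      (hP j).1) (fun j => (hP j).2) (hTsum.mul_left c)

lemma summable_inv_pow_mul_log_iff_integrableOn (hh : MonotoneOn h (Ioi 0))
    (hpos : ∀ x, 0 < x → 0 < h x) (hρ : ∀ j, 0 < ρ j) (hhρ : ∀ j, h (ρ j) = c * (k ^ j)⁻¹)
    (hc : 0 < c) (hk : 1 < k) :
    (Summable fun j => (k ^ j)⁻¹ * Real.log (ρ j)) ↔
      IntegrableOn (fun x => h x / x) (Ioc 0 (ρ 0)) := by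
  have hanti := (strictAnti_of_apply_eq_mul_inv_pow hh hρ hhρ hc hk).antitone
  have hlog : Tendsto (fun j => Real.log (ρ j)) atTop atBot :=
    Real.tendsto_log_nhdsGT_zero.comp (tendsto_nhdsWithin_iff.2
      ⟨tendsto_zero_of_apply_eq_mul_inv_pow hh hpos hρ hhρ hk, .of_forall hρ⟩)
  rw [← summable_inv_pow_mul_sub_succ_iff hk (fun i j hij => Real.log_le_log (hρ j) (hanti hij))
    hlog, integrableOn_Ioc_zero_div_self_iff_summable hh hpos hρ hhρ hc hk]

lemma setIntegral_Ioc_zero_div_self_mem_Icc (hh : MonotoneOn h (Ioi 0))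
    (hpos : ∀ x, 0 < x → 0 < h x) (hρ : ∀ j, 0 < ρ j) (hhρ : ∀ j, h (ρ j) = c * (k ^ j)⁻¹)
    (hc : 0 < c) (hk : 1 < k) {R : ℝ} (hR : ρ 0 ≤ R) (hhR : h R = c)
    (hA : Summable fun j => (k ^ j)⁻¹ * Real.log (ρ j)) :
    ∫ x in Ioc 0 R, h x / x ∈
      Icc (c * (-((k - 1) / k * ∑' j, (k ^ j)⁻¹ * Real.log (ρ j)) + Real.log R))
        (c * (-((k - 1) * ∑' j, (k ^ j)⁻¹ * Real.log (ρ j)) + k * Real.log R)) := by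
  have hanti := (strictAnti_of_apply_eq_mul_inv_pow hh hρ hhρ hc hk).antitone
  have hint := (summable_inv_pow_mul_log_iff_integrableOn hh hpos hρ hhρ hc hk).1 hA
  have hI := hasSum_setIntegral_Ioc_succ_div_self hh hpos hρ hhρ hc hk hint
  have hP := setIntegral_Ioc_succ_div_self_mem_Icc hh hρ hhρ hanti
  have hT := hasSum_inv_pow_mul_sub_succ hk
    (fun i j hij => Real.log_le_log (hρ j) (hanti hij)) hA
  have hlo := hasSum_le (fun j => (hP j).1) (hT.mul_left (c * k⁻¹)) hI
  have hhi := hasSum_le (fun j => (hP j).2) hI (hT.mul_left c)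
  have hlogR : Real.log (ρ 0) ≤ Real.log R := Real.log_le_log (hρ 0) hR
  rw [hh.setIntegral_Ioc_zero_div_self_of_apply_eq (hρ 0) hR (by simp [hhρ, hhR]) hint, hhρ 0,
    Real.log_div ((hρ 0).trans_le hR).ne' (hρ 0).ne']
  have hk0 : k ≠ 0 := (zero_lt_one.trans hk).ne'
  set S := ∑' j, (k ^ j)⁻¹ * Real.log (ρ j)
  simp only [pow_zero, inv_one, mul_one] at hlo hhi ⊢
  constructor
  · have : c * k⁻¹ * (k * Real.log (ρ 0) - (k - 1) * S) =
        c * (-((k - 1) / k * S) + Real.log (ρ 0)) := by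
      field_simp
      ring
    linarith
  · linarith [mul_nonneg (mul_nonneg hc.le (sub_nonneg.2 hk.le)) (sub_nonneg.2 hlogR)]

end GeometricLevels

lemma one_div_mul_rpow_mul_rpow_one_div {C k q : ℝ} (hC : 0 ≤ C) (hk : 0 < k) (hq : q ≠ 0)
    (j : ℕ) : (1 / (C * k ^ (q * (j : ℝ)))) ^ (1 / q) = (C ^ (1 / q))⁻¹ * (k ^ j)⁻¹ := by
  have hexp : q * (j : ℝ) * (1 / q) = j := by field_simp
  rw [one_div, Real.inv_rpow (by positivity), Real.mul_rpow hC (by positivity),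
    ← Real.rpow_mul hk.le, hexp, Real.rpow_natCast, mul_inv]

/-- the series `Σ k^{-j} log Φ⁻¹(1/(C k^{(p-1)j}))` converges iff
`∫₀ᴿ Φ(r)^{1/(p-1)}/r dr` converges, with two-sided quantitative bounds. -/
theorem series_iff_integral_converges
    (Φ : ℝ → ℝ)
    (hΦpos : ∀ r : ℝ, 0 < r → 0 < Φ r)
    (hΦmono : MonotoneOn Φ (Ioi (0:ℝ)))
    (hΦcont : ContinuousOn Φ (Ioi (0:ℝ)))
    (hΦlim : Tendsto Φ (𝓝[>] (0:ℝ)) (𝓝 0))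
    (C : ℝ) (hC : 0 < C) (hCmem : C⁻¹ ∈ Φ '' (Ioi (0:ℝ)))
    (k p : ℝ) (hk : 1 < k) (hp : 1 < p) :
    ((Summable fun j : ℕ =>
        (k ^ j)⁻¹ * Real.log (PhiInvAux Φ (1 / (C * k ^ ((p-1) * (j:ℝ))))))
      ↔ ∃ R > (0:ℝ),
          IntegrableOn (fun r => Φ r ^ (1/(p-1)) / r) (Ioc (0:ℝ) R) volume) ∧
    (∀ R₀ : ℝ, 0 < R₀ → Φ R₀ = C⁻¹ →
      (Summable fun j : ℕ =>
        (k ^ j)⁻¹ * Real.log (PhiInvAux Φ (1 / (C * k ^ ((p-1) * (j:ℝ)))))) →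
      (C ^ (1/(p-1)))⁻¹ *
          (-(((k-1)/k) * ∑' j : ℕ,
              (k ^ j)⁻¹ * Real.log (PhiInvAux Φ (1 / (C * k ^ ((p-1) * (j:ℝ))))))
            + Real.log R₀)
        ≤ (∫ r in Ioc (0:ℝ) R₀, Φ r ^ (1/(p-1)) / r) ∧
      (∫ r in Ioc (0:ℝ) R₀, Φ r ^ (1/(p-1)) / r)
        ≤ (C ^ (1/(p-1)))⁻¹ *
            (-((k-1) * ∑' j : ℕ,
                (k ^ j)⁻¹ * Real.log (PhiInvAux Φ (1 / (C * k ^ ((p-1) * (j:ℝ))))))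
              + k * Real.log R₀)) := by
  obtain ⟨b, hb, hΦb⟩ := hCmem
  have hk0 : 0 < k := zero_lt_one.trans hk
  set τ : ℕ → ℝ := fun j => 1 / (C * k ^ ((p - 1) * (j : ℝ)))
  have hτ (j : ℕ) : 0 < τ j ∧ τ j ≤ C⁻¹ := by
    simp only [τ, one_div]
    refine ⟨by positivity, ?_⟩
    exact inv_anti₀ hC (le_mul_of_one_le_right hC.le
      (Real.one_le_rpow hk.le (mul_nonneg (sub_nonneg.2 hp.le) j.cast_nonneg)))
  set ρ : ℕ → ℝ := fun j => PhiInvAux Φ (τ j)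
  have hρ (j : ℕ) : IsLeast {r | 0 < r ∧ Φ r = τ j} (ρ j) :=
    isLeast_phiInvAux hΦcont hΦlim hb (hτ j).1 ((hτ j).2.trans hΦb.ge)
  have hρpos (j : ℕ) : 0 < ρ j := (hρ j).1.1
  set h : ℝ → ℝ := fun r => Φ r ^ (1 / (p - 1))
  have hh : MonotoneOn h (Ioi 0) := fun x hx y hy hxy =>
    Real.rpow_le_rpow (hΦpos x hx).le (hΦmono hx hy hxy) (one_div_nonneg.2 (sub_nonneg.2 hp.le))
  have hpos (x : ℝ) (hx : 0 < x) : 0 < h x := Real.rpow_pos_of_pos (hΦpos x hx) _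
  have hhρ (j : ℕ) : h (ρ j) = (C ^ (1 / (p - 1)))⁻¹ * (k ^ j)⁻¹ := by
    simp only [h, (hρ j).1.2]
    exact one_div_mul_rpow_mul_rpow_one_div hC.le hk0 (sub_pos.2 hp).ne' j
  have hc : 0 < (C ^ (1 / (p - 1)))⁻¹ := by positivity
  refine ⟨(summable_inv_pow_mul_log_iff_integrableOn hh hpos hρpos hhρ hc hk).trans
    ⟨fun hint => ⟨ρ 0, hρpos 0, hint⟩, fun ⟨R, hR, hint⟩ =>
      (hh.integrableOn_Ioc_zero_div_self_iff hR (hρpos 0)).1 hint⟩, fun R₀ hR₀ hΦR₀ hA => ?_⟩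
  exact setIntegral_Ioc_zero_div_self_mem_Icc hh hpos hρpos hhρ hc hk
    ((hρ 0).2 ⟨hR₀, by simp [τ, hΦR₀]⟩) (by simp [h, hΦR₀, Real.inv_rpow hC.le]) hA

end
end
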